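/- arXiv:2412.19900 — 3 statements merged into one kernel-verified Lean document; each statement's English description precedes it below -/
import Mathlib

section
/- Let ρ : ℝⁿ → (0,∞) be a critical radius function with constants C₀, N₀ ≥ 1, i.e. C₀⁻¹ ρ(x)(1+|x−y|/ρ(x))^{−N₀} ≤ ρ(y) ≤ C₀ ρ(x)(1+|x−y|/ρ(x))^{N₀/(N₀+1)} for all x,y. Let Q_j = Q(x_j, r_j) be a cube, let k ∈ ℕ, let x ∈ 2^{k+1}Q_j \ 2^k Q_j and y ∈ Q_j. Then for every N > 0, (1 + |x−y|/ρ(x))^{−N} ≤ (4C₀√n)^N (1 + 2^{k+1} r_j / ρ(x_j))^{−N/(N₀+1)}. -/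
open MeasureTheory Set

noncomputable section

/-- The cube centered at `x` with radius `r` (half-diagonal), i.e. side length `2r/√n`. -/
def cube {n : ℕ} (x : EuclideanSpace ℝ (Fin n)) (r : ℝ) : Set (EuclideanSpace ℝ (Fin n)) :=
  {y | ∀ i, |y i - x i| ≤ r / Real.sqrt n}

/-- `ρ` is a critical radius function with constants `C₀, N₀ ≥ 1`. -/
def IsCriticalRadius {n : ℕ} (ρ : EuclideanSpace ℝ (Fin n) → ℝ) (C₀ N₀ : ℝ) : Prop :=
  1 ≤ C₀ ∧ 1 ≤ N₀ ∧ (∀ x, 0 < ρ x) ∧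
  ∀ x y, C₀⁻¹ * ρ x * (1 + dist x y / ρ x) ^ (-N₀) ≤ ρ y ∧
    ρ y ≤ C₀ * ρ x * (1 + dist x y / ρ x) ^ (N₀ / (N₀ + 1))

lemma coord_le_dist {n : ℕ} (x y : EuclideanSpace ℝ (Fin n)) (i : Fin n) :
    |x i - y i| ≤ dist x y := by
  rw [EuclideanSpace.dist_eq]
  have h1 : |x i - y i| = Real.sqrt (dist (x i) (y i) ^ 2) := by
    rw [Real.sqrt_sq_eq_abs, Real.dist_eq, abs_abs]
  rw [h1]
  apply Real.sqrt_le_sqrt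
  exact Finset.single_le_sum (f := fun j => dist (x j) (y j) ^ 2) (fun j _ => sq_nonneg _) (Finset.mem_univ i)

lemma dist_le_of_mem_cube {n : ℕ} (hn : 1 ≤ n) {x c : EuclideanSpace ℝ (Fin n)} {r : ℝ}
    (hr : 0 ≤ r) (hx : x ∈ cube c r) : dist x c ≤ r := by
  have hs : (1:ℝ) ≤ Real.sqrt n := by
    rw [show (1:ℝ) = Real.sqrt 1 by simp]
    exact Real.sqrt_le_sqrt (by exact_mod_cast hn)
  have hs0 : (0:ℝ) < Real.sqrt n := lt_of_lt_of_le one_pos hs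
  rw [EuclideanSpace.dist_eq]
  have hsum : (∑ i, dist (x i) (c i) ^ 2) ≤ ∑ _i : Fin n, (r / Real.sqrt n) ^ 2 := by
    apply Finset.sum_le_sum
    intro i _
    have := hx i
    rw [Real.dist_eq]
    exact pow_le_pow_left₀ (abs_nonneg _) this 2
  have : (∑ _i : Fin n, (r / Real.sqrt n) ^ 2 : ℝ) = r ^ 2 := by
    rw [Finset.sum_const, Finset.card_univ, Fintype.card_fin, nsmul_eq_mul]
    rw [div_pow, Real.sq_sqrt (by positivity : (0:ℝ) ≤ (n:ℝ))]
    field_simp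
  calc Real.sqrt (∑ i, dist (x i) (c i) ^ 2) ≤ Real.sqrt (r ^ 2) :=
        Real.sqrt_le_sqrt (by rw [← this]; exact hsum)
    _ = r := Real.sqrt_sq hr

/-- Claim: for `x ∈ 2^{k+1}Q_j \ 2^k Q_j` and `y ∈ Q_j`,
`(1+|x−y|/ρ(x))^{−N} ≤ (4C₀√n)^N (1+2^{k+1}r_j/ρ(x_j))^{−N/(N₀+1)}`. -/
theorem kernel_decay_claim {n : ℕ} (hn : 1 ≤ n)
    (ρ : EuclideanSpace ℝ (Fin n) → ℝ) (C₀ N₀ : ℝ)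
    (hρ : IsCriticalRadius ρ C₀ N₀)
    (xj : EuclideanSpace ℝ (Fin n)) (rj : ℝ) (hrj : 0 < rj) (k : ℕ) (hk : 1 ≤ k)
    (x y : EuclideanSpace ℝ (Fin n))
    (hx : x ∈ cube xj (2 ^ (k + 1) * rj) \ cube xj (2 ^ k * rj))
    (hy : y ∈ cube xj rj) (N : ℝ) (hN : 0 < N) :
    (1 + dist x y / ρ x) ^ (-N)
      ≤ (4 * C₀ * Real.sqrt n) ^ N *
        (1 + 2 ^ (k + 1) * rj / ρ xj) ^ (-(N / (N₀ + 1))) := by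
  obtain ⟨hC₀, hN₀, hρpos, hρineq⟩ := hρ
  have hs : (1:ℝ) ≤ Real.sqrt n := by
    rw [show (1:ℝ) = Real.sqrt 1 by simp]
    exact Real.sqrt_le_sqrt (by exact_mod_cast hn)
  have hs0 : (0:ℝ) < Real.sqrt n := lt_of_lt_of_le one_pos hs
  have hρx := hρpos x
  have hρxj := hρpos xj
  set T : ℝ := 2 ^ (k + 1) * rj / ρ xj with hT
  set b : ℝ := 1 + T with hbdef
  set a : ℝ := 1 + dist x y / ρ x with hadef
  set C : ℝ := 4 * C₀ * Real.sqrt n with hCdef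
  set p : ℝ := N₀ / (N₀ + 1) with hp
  have hT0 : 0 ≤ T := by positivity
  have hb1 : (1:ℝ) ≤ b := by simp [hbdef]; linarith
  have hb0 : (0:ℝ) < b := lt_of_lt_of_le one_pos hb1
  have ha1 : (1:ℝ) ≤ a := by
    have : 0 ≤ dist x y / ρ x := by positivity
    simp [hadef]; linarith
  have ha0 : (0:ℝ) < a := lt_of_lt_of_le one_pos ha1
  have hC1 : (1:ℝ) ≤ C := by
    calc (1:ℝ) = 1 * 1 * 1 := by ring
    _ ≤ 4 * C₀ * Real.sqrt n := by
        apply mul_le_mul (mul_le_mul (by norm_num) hC₀ one_pos.le (by norm_num)) hs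
          one_pos.le (by positivity)
  have hC0 : (0:ℝ) < C := lt_of_lt_of_le one_pos hC1
  have hp0 : 0 ≤ p := by
    apply div_nonneg <;> linarith
  -- lower bound on dist x y
  have hd : 2 ^ (k + 1) * rj / (4 * Real.sqrt n) ≤ dist x y := by
    have hx2 := hx.2
    simp only [cube, Set.mem_setOf_eq, not_forall, not_le] at hx2
    obtain ⟨i, hi⟩ := hx2
    have hyi := hy i
    have h1 : |x i - y i| ≤ dist x y := coord_le_dist x y i
    have h2 : |x i - xj i| - |y i - xj i| ≤ |x i - y i| := by
      have := abs_sub_abs_le_abs_sub (x i - xj i) (y i - xj i)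
      simpa using this
    have h2k : (2:ℝ) ≤ 2 ^ k := by
      calc (2:ℝ) = 2 ^ 1 := by norm_num
      _ ≤ 2 ^ k := pow_le_pow_right₀ one_le_two hk
    have key : 2 ^ (k + 1) * rj / (4 * Real.sqrt n) ≤
        2 ^ k * rj / Real.sqrt n - rj / Real.sqrt n := by
      rw [pow_succ]
      rw [div_sub_div_same, div_le_div_iff₀ (by positivity) hs0]
      have : (2:ℝ) ^ k * 2 * rj * Real.sqrt n = (2 ^ k * rj / 2) * (4 * Real.sqrt n) := by
        ring
      rw [this]
      apply mul_le_mul_of_nonneg_right _ (by positivity)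
      nlinarith
    linarith
  -- upper bound on dist x xj
  have hdxj : dist x xj ≤ 2 ^ (k + 1) * rj := dist_le_of_mem_cube hn (by positivity) hx.1
  -- ρ x ≤ C₀ * ρ xj * b ^ p
  have hρxle : ρ x ≤ C₀ * ρ xj * b ^ p := by
    have h := (hρineq xj x).2
    have hA : 1 + dist xj x / ρ xj ≤ b := by
      rw [dist_comm]
      have : dist x xj / ρ xj ≤ T := by
        rw [hT]; gcongr
      simp only [hbdef]; linarith
    calc ρ x ≤ C₀ * ρ xj * (1 + dist xj x / ρ xj) ^ p := h
    _ ≤ C₀ * ρ xj * b ^ p := by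
        apply mul_le_mul_of_nonneg_left _ (by positivity)
        apply Real.rpow_le_rpow (by positivity) hA hp0
  have hbp1 : (1:ℝ) ≤ b ^ p := Real.one_le_rpow hb1 hp0
  have hbp0 : (0:ℝ) < b ^ p := lt_of_lt_of_le one_pos hbp1
  -- key scalar inequality
  have main : b ^ (1 / (N₀ + 1)) ≤ C * a := by
    have hdiv : T / b ^ p ≤ C * (dist x y / ρ x) := by
      have h1 : 2 ^ (k + 1) * rj / (4 * Real.sqrt n) / (C₀ * ρ xj * b ^ p)
          ≤ dist x y / ρ x := div_le_div₀ dist_nonneg hd hρx hρxle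
      have h2 : C * (2 ^ (k + 1) * rj / (4 * Real.sqrt n) / (C₀ * ρ xj * b ^ p)) = T / b ^ p := by
        rw [hCdef, hT]
        field_simp
      calc T / b ^ p = C * (2 ^ (k + 1) * rj / (4 * Real.sqrt n) / (C₀ * ρ xj * b ^ p)) :=
            h2.symm
      _ ≤ C * (dist x y / ρ x) := mul_le_mul_of_nonneg_left h1 hC0.le
    have hfrac : b ^ (1 / (N₀ + 1)) ≤ 1 + T / b ^ p := by
      have hexp : (1:ℝ) / (N₀ + 1) = 1 - p := by
        rw [hp]; field_simp; ring
      rw [hexp, Real.rpow_sub hb0, Real.rpow_one, div_le_iff₀ hbp0]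
      have : (1 + T / b ^ p) * b ^ p = b ^ p + T := by
        field_simp
      rw [this]
      simp only [hbdef]
      linarith
    calc b ^ (1 / (N₀ + 1)) ≤ 1 + T / b ^ p := hfrac
    _ ≤ C + C * (dist x y / ρ x) := by
        have : (0:ℝ) ≤ dist x y / ρ x := by positivity
        linarith
    _ = C * a := by rw [hadef]; ring
  -- raise to the power N
  have key : b ^ (N / (N₀ + 1)) ≤ C ^ N * a ^ N := by
    have h := Real.rpow_le_rpow (by positivity) main hN.le
    rw [← Real.rpow_mul hb0.le, Real.mul_rpow hC0.le ha0.le] at h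
    · convert h using 2
      ring
  have haN : (0:ℝ) < a ^ N := Real.rpow_pos_of_pos ha0 N
  have hbN : (0:ℝ) < b ^ (N / (N₀ + 1)) := Real.rpow_pos_of_pos hb0 _
  rw [Real.rpow_neg ha0.le, Real.rpow_neg hb0.le]
  rw [inv_eq_one_div, inv_eq_one_div, mul_one_div, div_le_div_iff₀ haN hbN]
  nlinarith [key, haN, hbN]

end
end

section
/- Let ρ be a critical radius function with constants C₀, N₀. If x ∈ 2^{k+1}Q_j \ 2^k Q_j and y ∈ Q_j = Q(x_j, r_j), then 1 + |x−y|/ρ(x) ≥ (4C₀√n)^{−1} (1 + 2^{k+1} r_j / ρ(x_j))^{1/(N₀+1)}. -/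
open MeasureTheory Set

noncomputable section

/-- For `x ∈ 2^{k+1}Q_j \ 2^k Q_j` and `y ∈ Q_j`,
`1 + |x−y|/ρ(x) ≥ (4C₀√n)^{−1} (1+2^{k+1}r_j/ρ(x_j))^{1/(N₀+1)}`. -/
theorem one_add_dist_lower_bound {n : ℕ} (hn : 1 ≤ n)
    (ρ : EuclideanSpace ℝ (Fin n) → ℝ) (C₀ N₀ : ℝ)
    (hρ : IsCriticalRadius ρ C₀ N₀)
    (xj : EuclideanSpace ℝ (Fin n)) (rj : ℝ) (hrj : 0 < rj) (k : ℕ) (hk : 1 ≤ k)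
    (x y : EuclideanSpace ℝ (Fin n))
    (hx : x ∈ cube xj (2 ^ (k + 1) * rj) \ cube xj (2 ^ k * rj))
    (hy : y ∈ cube xj rj) :
    (4 * C₀ * Real.sqrt n)⁻¹ * (1 + 2 ^ (k + 1) * rj / ρ xj) ^ ((1:ℝ) / (N₀ + 1))
      ≤ 1 + dist x y / ρ x := by
  obtain ⟨hC₀, hN₀, hpos, hbd⟩ := hρ
  set s := Real.sqrt n with hsdef
  have hs : (1:ℝ) ≤ s := Real.one_le_sqrt.mpr (by exact_mod_cast hn)
  have hs0 : (0:ℝ) < s := lt_of_lt_of_le one_pos hs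
  obtain ⟨hx1, hx2⟩ := hx
  simp only [cube, mem_setOf_eq] at hx1 hx2 hy
  push_neg at hx2
  obtain ⟨i, hi⟩ := hx2
  have h2k : (2:ℝ) ≤ 2 ^ k := by
    calc (2:ℝ) = 2 ^ 1 := (pow_one 2).symm
    _ ≤ 2 ^ k := pow_le_pow_right₀ one_le_two hk
  -- lower bound on dist x y
  have hd : 2 ^ (k + 1) * rj / (4 * s) ≤ dist x y := by
    have h1 : |x i - y i| ≤ dist x y := coord_le_dist x y i
    have h2 : |x i - xj i| ≤ |x i - y i| + |y i - xj i| := by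
      calc |x i - xj i| = |(x i - y i) + (y i - xj i)| := by ring_nf
      _ ≤ |x i - y i| + |y i - xj i| := abs_add_le _ _
    have h3 : 2 ^ k * rj / s - rj / s ≤ |x i - y i| := by
      have := hy i
      linarith [hi.le]
    have hstep : 2 ^ (k + 1) * rj / (4 * s) ≤ (2 ^ k * rj - rj) / s := by
      rw [div_le_div_iff₀ (by positivity) hs0, pow_succ]
      nlinarith [mul_nonneg (mul_nonneg (sub_nonneg.mpr h2k) hrj.le) hs0.le]
    have h3' : (2 ^ k * rj - rj) / s ≤ |x i - y i| := by rw [sub_div]; exact h3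
    exact hstep.trans (h3'.trans h1)
  have hd0 : 0 < dist x y := lt_of_lt_of_le (by positivity) hd
  -- upper bound on dist xj x
  have hdj : dist xj x ≤ 2 ^ (k + 1) * rj := by
    rw [EuclideanSpace.dist_eq]
    have hb : ∀ j : Fin n, dist (xj j) (x j) ^ 2 ≤ (2 ^ (k + 1) * rj / s) ^ 2 := by
      intro j
      have h := hx1 j
      rw [Real.dist_eq, ← abs_sub_comm]
      calc |x j - xj j| ^ 2 = |x j - xj j| * |x j - xj j| := sq _
      _ ≤ (2 ^ (k + 1) * rj / s) * (2 ^ (k + 1) * rj / s) :=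
        mul_le_mul h h (abs_nonneg _) (by positivity)
      _ = (2 ^ (k + 1) * rj / s) ^ 2 := (sq _).symm
    calc Real.sqrt (∑ j, dist (xj j) (x j) ^ 2)
        ≤ Real.sqrt (∑ _j : Fin n, (2 ^ (k + 1) * rj / s) ^ 2) :=
          Real.sqrt_le_sqrt (Finset.sum_le_sum fun j _ => hb j)
      _ = Real.sqrt ((n : ℝ) * (2 ^ (k + 1) * rj / s) ^ 2) := by
          rw [Finset.sum_const, Finset.card_fin, nsmul_eq_mul]
      _ = 2 ^ (k + 1) * rj := by
          have hns : (n : ℝ) = s ^ 2 := by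
            rw [hsdef, Real.sq_sqrt (Nat.cast_nonneg n)]
          rw [hns]
          rw [show s ^ 2 * (2 ^ (k + 1) * rj / s) ^ 2 = (2 ^ (k + 1) * rj) ^ 2 by
            field_simp]
          exact Real.sqrt_sq (by positivity)
  set T : ℝ := 2 ^ (k + 1) * rj / ρ xj with hTdef
  have hPj : 0 < ρ xj := hpos xj
  have hP : 0 < ρ x := hpos x
  have hT0 : 0 < T := by positivity
  set B : ℝ := (1 + T) ^ (N₀ / (N₀ + 1)) with hBdef
  have hexp0 : 0 ≤ N₀ / (N₀ + 1) := by positivity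
  have hB1 : 1 ≤ B := by
    rw [hBdef]
    calc (1:ℝ) = (1 + T) ^ (0:ℝ) := (Real.rpow_zero _).symm
    _ ≤ (1 + T) ^ (N₀ / (N₀ + 1)) :=
      Real.rpow_le_rpow_of_exponent_le (by linarith) hexp0
  have hB0 : 0 < B := lt_of_lt_of_le one_pos hB1
  -- upper bound on ρ x
  have hup : ρ x ≤ C₀ * ρ xj * B := by
    have hbase : (0:ℝ) ≤ 1 + dist xj x / ρ xj :=
      add_nonneg one_pos.le (div_nonneg dist_nonneg hPj.le)
    have hmono : (1 + dist xj x / ρ xj) ^ (N₀ / (N₀ + 1)) ≤ (1 + T) ^ (N₀ / (N₀ + 1)) :=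
      Real.rpow_le_rpow hbase (by rw [hTdef]; gcongr) hexp0
    calc ρ x ≤ C₀ * ρ xj * (1 + dist xj x / ρ xj) ^ (N₀ / (N₀ + 1)) := (hbd xj x).2
    _ ≤ C₀ * ρ xj * B := by
        rw [hBdef]
        exact mul_le_mul_of_nonneg_left hmono (by positivity)
  -- key algebraic identity
  have hN1 : N₀ + 1 ≠ 0 := by linarith
  have hkey : (1 + T) ^ ((1:ℝ) / (N₀ + 1)) = (1 + T) / B := by
    rw [eq_div_iff hB0.ne', hBdef, ← Real.rpow_add (by linarith)]
    rw [← add_div, add_comm (1:ℝ) N₀, div_self hN1, Real.rpow_one]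
  have hA0 : (0:ℝ) < 4 * C₀ * s := by positivity
  have hAB1 : (1:ℝ) ≤ 4 * C₀ * s * B := by nlinarith
  have hT' : T * ρ x ≤ 2 ^ (k + 1) * rj * (C₀ * B) := by
    calc T * ρ x ≤ T * (C₀ * ρ xj * B) := by
          exact mul_le_mul_of_nonneg_left hup hT0.le
    _ = 2 ^ (k + 1) * rj * (C₀ * B) := by
          rw [hTdef]; field_simp
  have hd' : 2 ^ (k + 1) * rj ≤ dist x y * (4 * s) := by
    rwa [div_le_iff₀ (by positivity)] at hd
  have key : (1 + T) * ρ x ≤ (ρ x + dist x y) * (4 * C₀ * s * B) := by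
    have h1 : ρ x ≤ ρ x * (4 * C₀ * s * B) := le_mul_of_one_le_right hP.le hAB1
    have h2 : 2 ^ (k + 1) * rj * (C₀ * B) ≤ dist x y * (4 * s) * (C₀ * B) :=
      mul_le_mul_of_nonneg_right hd' (by positivity)
    calc (1 + T) * ρ x = ρ x + T * ρ x := by ring
    _ ≤ ρ x * (4 * C₀ * s * B) + dist x y * (4 * s) * (C₀ * B) :=
        add_le_add h1 (hT'.trans h2)
    _ = (ρ x + dist x y) * (4 * C₀ * s * B) := by ring
  have hgoal : 1 + dist x y / ρ x = (ρ x + dist x y) / ρ x := by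
    field_simp
  rw [hgoal, show (1 + 2 ^ (k + 1) * rj / ρ xj : ℝ) = 1 + T from rfl, hkey,
    inv_mul_eq_div, div_div, mul_comm B (4 * C₀ * s)]
  exact (div_le_div_iff₀ (by positivity) hP).mpr key
end
end

section
/- Let 0 < δ ≤ 1 and let K : ℝⁿ × ℝⁿ → ℝ be a kernel satisfying: (size) for every N > 0 there is C_N with |K(x,y)| ≤ C_N |x−y|^{−n} (1+|x−y|/ρ(x))^{−N} for x ≠ y, and (smoothness) |K(x,y) − K(x,y₀)| ≤ C |y−y₀|^δ / |x−y|^{n+δ} whenever |x−y| > 2|y−y₀|. Then for every 0 < δ̃ < δ and every N > 0 there exists C > 0 such that |K(x,y) − K(x,y₀)| ≤ C (|y−y₀|^{δ̃} / |x−y|^{n+δ̃}) (1+|x−y|/ρ(x))^{−N} whenever |x−y| > 2|y−y₀|. -/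
open MeasureTheory Set

noncomputable section

lemma interp_aux {a A B σ : ℝ} (ha : 0 ≤ a) (hσ0 : 0 ≤ σ) (hσ1 : σ ≤ 1)
    (h1 : a ≤ A) (h2 : a ≤ B) : a ≤ A ^ σ * B ^ (1 - σ) := by
  have hA : 0 ≤ A := ha.trans h1
  calc a = a ^ σ * a ^ (1 - σ) := by
        rw [← Real.rpow_add_of_nonneg ha hσ0 (by linarith)]; simp
    _ ≤ A ^ σ * B ^ (1 - σ) :=
        mul_le_mul (Real.rpow_le_rpow ha h1 hσ0) (Real.rpow_le_rpow ha h2 (by linarith))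
          (Real.rpow_nonneg ha _) (Real.rpow_nonneg hA _)

/-- A kernel satisfying the size and smoothness estimates of an `(∞,δ)`-Schrödinger–
Calderón–Zygmund operator satisfies the stronger smoothness estimate with extra decay:
for every `0 < δ̃ < δ` and `N > 0`,
`|K(x,y) − K(x,y₀)| ≤ C (|y−y₀|^{δ̃}/|x−y|^{n+δ̃}) (1+|x−y|/ρ(x))^{−N}`
whenever `|x−y| > 2|y−y₀|`. -/
theorem improved_smoothness {n : ℕ} (ρ : EuclideanSpace ℝ (Fin n) → ℝ) (C₀ N₀ : ℝ)
    (hρ : IsCriticalRadius ρ C₀ N₀)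
    (δ : ℝ) (hδ0 : 0 < δ) (hδ1 : δ ≤ 1)
    (K : EuclideanSpace ℝ (Fin n) → EuclideanSpace ℝ (Fin n) → ℝ)
    (hsize : ∀ N > (0:ℝ), ∃ CN > (0:ℝ), ∀ x y, x ≠ y →
      |K x y| ≤ CN / dist x y ^ (n:ℝ) * (1 + dist x y / ρ x) ^ (-N))
    (hsmooth : ∃ C > (0:ℝ), ∀ x y y₀, dist x y > 2 * dist y y₀ →
      |K x y - K x y₀| ≤ C * dist y y₀ ^ δ / dist x y ^ ((n:ℝ) + δ)) :
    ∀ (δ' N : ℝ), 0 < δ' → δ' < δ → 0 < N →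
      ∃ C > (0:ℝ), ∀ x y y₀, dist x y > 2 * dist y y₀ →
        |K x y - K x y₀| ≤
          C * (dist y y₀ ^ δ' / dist x y ^ ((n:ℝ) + δ')) * (1 + dist x y / ρ x) ^ (-N) := by
  intro δ' N hδ'0 hδ'δ hN
  set σ : ℝ := 1 - δ' / δ with hσdef
  have hσ0 : 0 < σ := by
    have : δ' / δ < 1 := (div_lt_one hδ0).mpr hδ'δ
    simp only [hσdef]; linarith
  have hσ1 : σ < 1 := by
    have : 0 < δ' / δ := div_pos hδ'0 hδ0
    simp only [hσdef]; linarith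
  set N' : ℝ := N / σ with hN'def
  have hN' : 0 < N' := div_pos hN hσ0
  obtain ⟨C₁, hC₁pos, hC₁⟩ := hsize N' hN'
  obtain ⟨C, hCpos, hC⟩ := hsmooth
  set CA : ℝ := C₁ * (1 + 2 ^ (n:ℝ) * 2 ^ N') with hCAdef
  have hCApos : 0 < CA := by positivity
  refine ⟨CA ^ σ * C ^ (1 - σ), by positivity, ?_⟩
  intro x y y₀ hxyy₀
  set d : ℝ := dist x y with hd_def
  set r : ℝ := dist y y₀ with hr_def
  set d₀ : ℝ := dist x y₀ with hd₀_def
  have hr0 : 0 ≤ r := dist_nonneg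
  have hd : 0 < d := lt_of_le_of_lt (by positivity) hxyy₀
  have hd₀half : d / 2 ≤ d₀ := by
    have htri : d ≤ d₀ + r := by
      simpa [hd_def, hd₀_def, hr_def, dist_comm y₀ y] using dist_triangle x y₀ y
    linarith
  have hd₀ : 0 < d₀ := by linarith
  have hxy : x ≠ y := by
    intro h; rw [hd_def, h, dist_self] at hd; exact lt_irrefl _ hd
  have hxy₀ : x ≠ y₀ := by
    intro h; rw [hd₀_def, h, dist_self] at hd₀; exact lt_irrefl _ hd₀
  have hρx : 0 < ρ x := hρ.2.2.1 x
  set t : ℝ := 1 + d / ρ x with ht_def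
  set t₀ : ℝ := 1 + d₀ / ρ x with ht₀_def
  have ht : 1 ≤ t := by
    rw [ht_def]
    have : 0 ≤ d / ρ x := by positivity
    linarith
  have htpos : 0 < t := lt_of_lt_of_le one_pos ht
  have ht₀pos : 0 < t₀ := by
    rw [ht₀_def]
    have : 0 ≤ d₀ / ρ x := by positivity
    linarith
  have ht2 : t / 2 ≤ t₀ := by
    rw [ht_def, ht₀_def]
    have h1 : d / ρ x ≤ 2 * d₀ / ρ x := by gcongr; linarith
    have h2 : 2 * d₀ / ρ x = 2 * (d₀ / ρ x) := by ring
    linarith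
  -- bound on |K x y₀|
  have hKy : |K x y| ≤ C₁ / d ^ (n:ℝ) * t ^ (-N') := hC₁ x y hxy
  have hKy₀' : |K x y₀| ≤ C₁ / d₀ ^ (n:ℝ) * t₀ ^ (-N') := hC₁ x y₀ hxy₀
  have hpow1 : C₁ / d₀ ^ (n:ℝ) ≤ C₁ * 2 ^ (n:ℝ) / d ^ (n:ℝ) := by
    rw [div_le_div_iff₀ (by positivity) (by positivity)]
    have h1 : (d / 2) ^ (n:ℝ) ≤ d₀ ^ (n:ℝ) :=
      Real.rpow_le_rpow (by positivity) hd₀half (by positivity)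
    have h2 : (d / 2) ^ (n:ℝ) = d ^ (n:ℝ) / 2 ^ (n:ℝ) :=
      Real.div_rpow hd.le (by norm_num) _
    rw [h2] at h1
    have h3 : d ^ (n:ℝ) ≤ d₀ ^ (n:ℝ) * 2 ^ (n:ℝ) := by
      rw [div_le_iff₀ (by positivity)] at h1; linarith
    calc C₁ * d ^ (n:ℝ) ≤ C₁ * (d₀ ^ (n:ℝ) * 2 ^ (n:ℝ)) := by gcongr
      _ = C₁ * 2 ^ (n:ℝ) * d₀ ^ (n:ℝ) := by ring
  have hpow2 : t₀ ^ (-N') ≤ 2 ^ N' * t ^ (-N') := by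
    have h1 : t₀ ^ (-N') ≤ (t / 2) ^ (-N') :=
      Real.rpow_le_rpow_of_nonpos (half_pos htpos) ht2 (by linarith)
    have h2 : (t / 2) ^ (-N') = t ^ (-N') / 2 ^ (-N') :=
      Real.div_rpow htpos.le (by norm_num) _
    have h3 : (2:ℝ) ^ (-N') = (2 ^ N')⁻¹ := by
      rw [Real.rpow_neg (by norm_num)]
    rw [h2, h3, div_inv_eq_mul] at h1
    linarith [h1]
  have hA : |K x y - K x y₀| ≤ CA / d ^ (n:ℝ) * t ^ (-N') := by
    calc |K x y - K x y₀| ≤ |K x y| + |K x y₀| := abs_sub _ _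
      _ ≤ C₁ / d ^ (n:ℝ) * t ^ (-N') + C₁ * 2 ^ (n:ℝ) / d ^ (n:ℝ) * (2 ^ N' * t ^ (-N')) := by
          exact add_le_add hKy (hKy₀'.trans
            (mul_le_mul hpow1 hpow2 (by positivity) (by positivity)))
      _ = CA / d ^ (n:ℝ) * t ^ (-N') := by rw [hCAdef]; ring
  have hB : |K x y - K x y₀| ≤ C * r ^ δ / d ^ ((n:ℝ) + δ) := hC x y y₀ hxyy₀
  have key := interp_aux (abs_nonneg _) hσ0.le hσ1.le hA hB
  refine key.trans (le_of_eq ?_)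
  have hδσ : δ * (1 - σ) = δ' := by
    rw [hσdef]; field_simp; ring
  have hNσ : -N' * σ = -N := by
    rw [hN'def]; field_simp
  have hCAσnn : (0:ℝ) ≤ CA := hCApos.le
  rw [div_eq_mul_inv CA, div_eq_mul_inv (C * r ^ δ), div_eq_mul_inv (r ^ δ'),
    ← Real.rpow_neg hd.le, ← Real.rpow_neg hd.le, ← Real.rpow_neg hd.le]
  rw [Real.mul_rpow (by positivity) (by positivity : (0:ℝ) ≤ t ^ (-N')),
      Real.mul_rpow hCAσnn (by positivity),
      Real.mul_rpow (by positivity) (by positivity : (0:ℝ) ≤ d ^ (-((n:ℝ)+δ))),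
      Real.mul_rpow hCpos.le (by positivity : (0:ℝ) ≤ r ^ δ)]
  rw [← Real.rpow_mul hd.le, ← Real.rpow_mul htpos.le, ← Real.rpow_mul hr0,
    ← Real.rpow_mul hd.le, hNσ, hδσ]
  have hdd : d ^ (-((n:ℝ) + δ')) = d ^ (-(n:ℝ) * σ) * d ^ (-((n:ℝ) + δ) * (1 - σ)) := by
    rw [← Real.rpow_add hd]
    congr 1
    linarith [hδσ]
  rw [hdd]
  ring
end
end
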